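/- In the connected sum BP₃ #_g BP₃' of two 3-gonal bipyramids glued along the faces a12 and a'1'2' via g(a)=a', g(1)=1', g(2)=2', the triangulation is z-knotted, exactly the two faces b12 and b'12 have z-monodromy of type (M2) (M_F = D_F), all other eight faces have z-monodromy of type (M3) or (M4), and the induced subgraph G₂ of the dual graph on type-(M2) faces is the path P₂ on two vertices. -/

import Mathlib

open Finset

/-- A (combinatorial) triangulation of a connected closed surface:
a finite set of triangular faces such that every edge lies in exactly two
faces, two distinct faces meet in at most an edge, and the dual graph is
connected. -/
structure Triangulation (V : Type) [Fintype V] [DecidableEq V] where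
  faces : Finset (Finset V)
  faces_nonempty : faces.Nonempty
  card_eq : ∀ F ∈ faces, F.card = 3
  edge_two_faces : ∀ e : Finset V, e.card = 2 → (∃ F ∈ faces, e ⊆ F) →
      (faces.filter fun F => e ⊆ F).card = 2
  inter_le : ∀ F ∈ faces, ∀ F' ∈ faces, F ≠ F' → (F ∩ F').card ≤ 2
  connected : ∀ F ∈ faces, ∀ F' ∈ faces,
      Relation.ReflTransGen
        (fun A B => A ∈ faces ∧ B ∈ faces ∧ (A ∩ B).card = 2) F F'

namespace Triangulation

variable {V : Type} [Fintype V] [DecidableEq V] (T : Triangulation V)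

/-- `e` is an edge of the triangulation. -/
def IsEdge (e : Finset V) : Prop := e.card = 2 ∧ ∃ F ∈ T.faces, e ⊆ F

/-- A zigzag sequence: consecutive edges are adjacent (distinct, sharing a
vertex and a face), the faces containing consecutive pairs are distinct, and
edges two apart are disjoint. -/
def IsZigzagSeq (f : ℕ → Finset V) : Prop :=
  (∀ i, T.IsEdge (f i)) ∧
  (∀ i, f i ≠ f (i + 1) ∧ (f i ∩ f (i + 1)).Nonempty ∧
      ∃ F ∈ T.faces, f i ⊆ F ∧ f (i + 1) ⊆ F) ∧
  (∀ i, ∀ F ∈ T.faces, ∀ F' ∈ T.faces,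
      f i ⊆ F → f (i + 1) ⊆ F → f (i + 1) ⊆ F' → f (i + 2) ⊆ F' → F ≠ F') ∧
  (∀ i, f i ∩ f (i + 2) = ∅)

/-- A zigzag: a zigzag sequence together with its (minimal) period. -/
structure Zigzag where
  seq : ℕ → Finset V
  period : ℕ
  period_pos : 0 < period
  periodic : ∀ i, seq (i + period) = seq i
  period_min : ∀ m, 0 < m → (∀ i, seq (i + m) = seq i) → period ≤ m
  isZigzag : T.IsZigzagSeq seq

variable {T}

/-- Two zigzags are the same cyclic sequence (up to a shift). -/
def Zigzag.Equiv (Z Z' : T.Zigzag) : Prop := ∃ k, ∀ i, Z'.seq i = Z.seq (i + k)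

/-- `Z'` is the reversal of `Z` (up to a shift). -/
def Zigzag.IsReverseOf (Z' Z : T.Zigzag) : Prop :=
  ∃ k, ∀ i, Z'.seq i = Z.seq (k + Z.period - i % Z.period)

/-- The zigzag `Z` contains an edge of the face `F`. -/
def Zigzag.Meets (Z : T.Zigzag) (F : Finset V) : Prop := ∃ i, Z.seq i ⊆ F

/-- `F` is the `i`-th face of the face shadow of `Z`, i.e. the face containing
the `i`-th and `(i+1)`-st edges of `Z`. -/
def Zigzag.ShadowAt (Z : T.Zigzag) (i : ℕ) (F : Finset V) : Prop :=
  F ∈ T.faces ∧ Z.seq i ⊆ F ∧ Z.seq (i + 1) ⊆ F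

/-- At position `i`, the zigzag `Z` traverses the oriented edge from `x`
to `y` (the head `y` is the vertex shared with the next edge). -/
def Zigzag.Passes (Z : T.Zigzag) (i : ℕ) (x y : V) : Prop :=
  Z.seq i = {x, y} ∧ x ≠ y ∧ y ∈ Z.seq (i + 1)

variable (T)

/-- The triangulation is locally z-knotted in the face `F`:
`𝒵(F) = {Z, Z⁻¹}`. -/
def LocallyZKnotted (F : Finset V) : Prop :=
  (∃ Z : T.Zigzag, Z.Meets F) ∧
  ∀ Z Z' : T.Zigzag, Z.Meets F → Z'.Meets F → Z.Equiv Z' ∨ Z'.IsReverseOf Z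

/-- The triangulation is z-knotted: it has exactly one zigzag up to
reversal. -/
def ZKnotted : Prop :=
  Nonempty T.Zigzag ∧ ∀ Z Z' : T.Zigzag, Z.Equiv Z' ∨ Z'.IsReverseOf Z

/-- The z-monodromy relation of the face `F`: `M_F` sends the oriented edge
`(x,y)` of `F` to the oriented edge `(u,v)` of `F`.  Here `(u,v)` is the first
oriented edge of `F` occurring in the zigzag through `D_F⁻¹(x,y), (x,y)`
after `(x,y)`. -/
def MonodromyRel (F : Finset V) (x y u v : V) : Prop :=
  x ∈ F ∧ y ∈ F ∧
  ∃ Z : T.Zigzag, ∃ i j : ℕ,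
    (∃ z, z ∈ F ∧ z ≠ x ∧ z ≠ y ∧ Z.Passes i z x) ∧
    Z.Passes (i + 1) x y ∧
    i + 1 < j ∧ Z.Passes j u v ∧ u ∈ F ∧ v ∈ F ∧
    (∀ k, i + 1 < k → k < j → ∀ a b, a ∈ F → b ∈ F → ¬ Z.Passes k a b)

/-- The z-monodromy of `F` is the identity (type (M1)). -/
def MFIsId (F : Finset V) : Prop :=
  ∀ x y, x ∈ F → y ∈ F → x ≠ y → T.MonodromyRel F x y x y

/-- The z-monodromy of `F` is `D_F` (type (M2)). -/
def MFIsD (F : Finset V) : Prop :=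
  ∀ x y z : V, ({x, y, z} : Finset V) = F → x ≠ y → y ≠ z → x ≠ z →
    T.MonodromyRel F x y y z

/-- The z-monodromy of `F` is `D_F⁻¹` (type (M5)). -/
def MFIsDInv (F : Finset V) : Prop :=
  ∀ x y z : V, ({x, y, z} : Finset V) = F → x ≠ y → y ≠ z → x ≠ z →
    T.MonodromyRel F x y z x

/-- The z-monodromy of `F` is of type (M3):
`M_F = (-e₁,e₂,e₃)(-e₃,-e₂,e₁)` for a cycle `(e₁,e₂,e₃)` of `D_F`. -/
def MFIsM3 (F : Finset V) : Prop :=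
  ∃ x y z : V, ({x, y, z} : Finset V) = F ∧ x ≠ y ∧ y ≠ z ∧ x ≠ z ∧
    T.MonodromyRel F y x y z ∧ T.MonodromyRel F y z z x ∧
    T.MonodromyRel F z x y x ∧ T.MonodromyRel F x z z y ∧
    T.MonodromyRel F z y x y ∧ T.MonodromyRel F x y x z

/-- The z-monodromy of `F` is of type (M4):
`M_F = (e₁,-e₂)(e₂,-e₁)` with `e₃, -e₃` fixed, for a cycle `(e₁,e₂,e₃)`
of `D_F`. -/
def MFIsM4 (F : Finset V) : Prop :=
  ∃ x y z : V, ({x, y, z} : Finset V) = F ∧ x ≠ y ∧ y ≠ z ∧ x ≠ z ∧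
    T.MonodromyRel F x y z y ∧ T.MonodromyRel F z y x y ∧
    T.MonodromyRel F y z y x ∧ T.MonodromyRel F y x y z ∧
    T.MonodromyRel F z x z x ∧ T.MonodromyRel F x z x z

/-- The dual graph: vertices are faces, adjacent iff they share an edge. -/
def dualGraph : SimpleGraph {F : Finset V // F ∈ T.faces} where
  Adj A B := A ≠ B ∧ ((A : Finset V) ∩ (B : Finset V)).card = 2
  symm := by
    constructor
    intro A B h
    exact ⟨h.1.symm, by rw [Finset.inter_comm]; exact h.2⟩
  loopless := by constructor; intro A h; exact h.1 rfl

end Triangulation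

/-- The faces of the 3-gonal bipyramid `BP₃`: vertices `0,1,2` form the
triangle (labels `1,2,3`), `3` is the apex `a` and `4` is the apex `b`. -/
def bp3Faces : Finset (Finset (Fin 5)) :=
  {{3, 0, 1}, {3, 1, 2}, {3, 2, 0}, {4, 0, 1}, {4, 1, 2}, {4, 2, 0}}

/-- The faces of the connected sum of two triangulations with face sets
`faces₁`, `faces₂`, glued along the faces `F₁`, `F₂` via the identification
`g` of the vertices of `F₂` with the vertices of `F₁`. -/
def connSumFaces {V₁ V₂ : Type} [DecidableEq V₁] [DecidableEq V₂]
    (faces₁ : Finset (Finset V₁)) (faces₂ : Finset (Finset V₂))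
    (F₁ : Finset V₁) (F₂ : Finset V₂) (g : V₂ → V₁) :
    Finset (Finset (V₁ ⊕ V₂)) :=
  ((faces₁.erase F₁).image fun F => F.image Sum.inl) ∪
  ((faces₂.erase F₂).image fun F =>
    F.image fun w => if w ∈ F₂ then Sum.inl (g w) else Sum.inr w)

/-- The face `b12` of the first summand. -/
def faceB12 : Finset (Fin 5 ⊕ Fin 5) := {Sum.inl 4, Sum.inl 0, Sum.inl 1}

/-- The face `b'12` coming from the second summand. -/
def faceB'12 : Finset (Fin 5 ⊕ Fin 5) := {Sum.inr 4, Sum.inl 0, Sum.inl 1}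

/-!
A zigzag is determined by two consecutive edges: the next edge is the other face through the
current edge minus the previous edge. In `BP₃ #_g BP₃'` (10 faces, 15 edges) a closed walk of
length 30 traces a zigzag through every edge twice, and each ordered pair of distinct edges of a
face occurs consecutively in it or in its reverse. Hence every zigzag is a shift of
this one or of its reverse, so the triangulation is z-knotted, and the z-monodromy of a face is
read off by following this single zigzag for one period, a finite computation.
-/

-- Without this, bounded quantifiers over lists and finsets of finsets are decided through
-- `Fintype` on the whole (huge) type of finsets.
attribute [local instance 2000] List.decidableBAll Finset.decidableDforallFinset

theorem List.IsChain.reflTransGen_of_mem {α : Type*} {r : α → α → Prop} [Std.Symm r]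
    {l : List α} (hl : l.IsChain r) {a b : α} (ha : a ∈ l) (hb : b ∈ l) :
    Relation.ReflTransGen r a b := by
  have hl0 : l ≠ [] := List.ne_nil_of_mem ha
  have hhead : ∀ c ∈ l, Relation.ReflTransGen r (l.head hl0) c :=
    hl.induction _ _ (fun _ _ hr h => h.tail hr) (fun _ => .refl)
  exact (Std.Symm.symm _ _ (hhead a ha)).trans (hhead b hb)

namespace Triangulation

variable {V : Type} [Fintype V] [DecidableEq V] {T : Triangulation V}

theorem eq_of_edge_subset_of_ne {e F G G' : Finset V} (he : e.card = 2) (hF : F ∈ T.faces)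
    (hG : G ∈ T.faces) (hG' : G' ∈ T.faces) (heF : e ⊆ F) (heG : e ⊆ G) (heG' : e ⊆ G')
    (hFG : F ≠ G) (hFG' : F ≠ G') : G = G' := by
  by_contra hGG'
  have hsub : ({F, G, G'} : Finset (Finset V)) ⊆ T.faces.filter (e ⊆ ·) := by
    simp [insert_subset_iff, *]
  have := card_le_card hsub
  rw [T.edge_two_faces e he ⟨F, hF, heF⟩, card_insert_of_notMem (by simp [hFG, hFG']),
    card_pair hGG'] at this
  omega

variable (T) in
def IsZigzagTriple (a b c : Finset V) : Prop :=
  T.IsEdge a ∧ (a ≠ b ∧ (a ∩ b).Nonempty ∧ ∃ F ∈ T.faces, a ⊆ F ∧ b ⊆ F) ∧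
    (∀ F ∈ T.faces, ∀ F' ∈ T.faces, a ⊆ F → b ⊆ F → b ⊆ F' → c ⊆ F' → F ≠ F') ∧ a ∩ c = ∅

set_option synthInstance.maxSize 1000 in
instance (a b c : Finset V) : Decidable (T.IsZigzagTriple a b c) := by
  unfold IsZigzagTriple IsEdge; infer_instance

theorem isZigzagSeq_iff {f : ℕ → Finset V} :
    T.IsZigzagSeq f ↔ ∀ i, T.IsZigzagTriple (f i) (f (i + 1)) (f (i + 2)) := by
  simp only [IsZigzagSeq, IsZigzagTriple, forall_and]

theorem isZigzagSeq_of_periodic {f : ℕ → Finset V} {p : ℕ} (hp : 0 < p)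
    (hf : Function.Periodic f p) (h : ∀ i < p, T.IsZigzagTriple (f i) (f (i + 1)) (f (i + 2))) :
    T.IsZigzagSeq f := by
  refine isZigzagSeq_iff.2 fun i => ?_
  have hmod : ∀ k, f (i % p + k) = f (i + k) := fun k => by
    rw [← hf.map_mod_nat (i % p + k), Nat.mod_add_mod, hf.map_mod_nat]
  rw [← hf.map_mod_nat i, ← hmod 1, ← hmod 2]
  exact h (i % p) (Nat.mod_lt i hp)

namespace IsZigzagSeq

variable {f g : ℕ → Finset V}

theorem eq_sdiff (hf : T.IsZigzagSeq f) {i : ℕ} {G : Finset V} (hG : G ∈ T.faces)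
    (h1 : f (i + 1) ⊆ G) (h2 : f (i + 2) ⊆ G) : f (i + 2) = G \ f i := by
  have hsub : f (i + 2) ⊆ G \ f i := fun a ha =>
    mem_sdiff.2 ⟨h2 ha, fun hai => by simpa [hf.2.2.2 i] using mem_inter.2 ⟨hai, ha⟩⟩
  obtain ⟨v, hv⟩ := (hf.2.1 i).2.1
  have hmeet : 0 < (G ∩ f i).card :=
    card_pos.2 ⟨v, mem_inter.2 ⟨h1 (mem_inter.1 hv).2, (mem_inter.1 hv).1⟩⟩
  have := card_sdiff_add_card_inter G (f i)
  have := T.card_eq G hG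
  exact eq_of_subset_of_card_le hsub (by rw [(hf.1 (i + 2)).1]; omega)

theorem add_two_eq (hf : T.IsZigzagSeq f) (hg : T.IsZigzagSeq g) {i j : ℕ} (h0 : f i = g j)
    (h1 : f (i + 1) = g (j + 1)) : f (i + 2) = g (j + 2) := by
  obtain ⟨-, -, F, hF, hF0, hF1⟩ := hf.2.1 i
  obtain ⟨-, -, G, hG, hG1, hG2⟩ := hf.2.1 (i + 1)
  obtain ⟨-, -, G', hG', hG'1, hG'2⟩ := hg.2.1 (j + 1)
  have hFG : F ≠ G := hf.2.2.1 i F hF G hG hF0 hF1 hG1 hG2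
  have hFG' : F ≠ G' := hg.2.2.1 j F hF G' hG' (h0 ▸ hF0) (h1 ▸ hF1) hG'1 hG'2
  have hGG' : G = G' :=
    eq_of_edge_subset_of_ne (hf.1 (i + 1)).1 hF hG hG' hF1 hG1 (h1 ▸ hG'1) hFG hFG'
  rw [hf.eq_sdiff hG hG1 hG2, hg.eq_sdiff hG' hG'1 hG'2, hGG', h0]

theorem add_eq_of_eq (hf : T.IsZigzagSeq f) (hg : T.IsZigzagSeq g) {i j : ℕ} (h0 : f i = g j)
    (h1 : f (i + 1) = g (j + 1)) (n : ℕ) : f (i + n) = g (j + n) := by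
  induction n using Nat.twoStepInduction with
  | zero => exact h0
  | one => exact h1
  | more n ih0 ih1 => simpa only [add_assoc] using hf.add_two_eq hg ih0 ih1

end IsZigzagSeq

namespace Zigzag

def ofPeriodic (f : ℕ → Finset V) (p : ℕ) (hp : 0 < p) (hf : Function.Periodic f p)
    (hz : ∀ i < p, T.IsZigzagTriple (f i) (f (i + 1)) (f (i + 2)))
    (hmin : ∀ m < p, 0 < m → f m ≠ f 0 ∨ f (m + 1) ≠ f 1) : T.Zigzag where
  seq := f
  period := p
  period_pos := hp
  periodic := hf
  period_min m hm h := by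
    by_contra! hmp
    rcases hmin m hmp hm with h0 | h1
    · exact h0 (by simpa using h 0)
    · exact h1 (by simpa [add_comm] using h 1)
  isZigzag := isZigzagSeq_of_periodic hp hf hz

theorem seq_eq_of_mod_eq (Z : T.Zigzag) {a b : ℕ} (h : a % Z.period = b % Z.period) :
    Z.seq a = Z.seq b := by
  have hper : Function.Periodic Z.seq Z.period := Z.periodic
  rw [← hper.map_mod_nat, h, hper.map_mod_nat]

theorem period_eq_of_seq_eq_add {Z Z' : T.Zigzag} {k : ℕ} (h : ∀ i, Z.seq i = Z'.seq (i + k)) :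
    Z.period = Z'.period := by
  apply le_antisymm
  · exact Z.period_min _ Z'.period_pos fun i => by rw [h, h, add_right_comm, Z'.periodic]
  · obtain ⟨q, hq⟩ := Nat.exists_eq_succ_of_ne_zero Z'.period_pos.ne'
    have hper : Function.Periodic Z'.seq (k * Z'.period) := by
      simpa using Function.Periodic.nat_mul Z'.periodic k
    have hZ' : ∀ n, Z'.seq n = Z.seq (n + q * k) := fun n => by
      rw [h, add_assoc, ← Nat.succ_mul, ← hq, mul_comm, hper]
    exact Z'.period_min _ Z.period_pos fun i => by rw [hZ', hZ', add_right_comm, Z.periodic]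

theorem exists_seq_eq_add {Zs : List T.Zigzag}
    (hZs : ∀ F ∈ T.faces, ∀ e ∈ F.powersetCard 2, ∀ e' ∈ F.powersetCard 2, e ≠ e' →
      ∃ Z ∈ Zs, ∃ k < Z.period, Z.seq k = e ∧ Z.seq (k + 1) = e')
    (Z : T.Zigzag) : ∃ Z' ∈ Zs, ∃ k, ∀ i, Z.seq i = Z'.seq (i + k) := by
  obtain ⟨hne, -, F, hF, h0, h1⟩ := Z.isZigzag.2.1 0
  obtain ⟨Z', hZ', k, -, hk0, hk1⟩ := hZs F hF _ (mem_powersetCard.2 ⟨h0, (Z.isZigzag.1 0).1⟩)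
    _ (mem_powersetCard.2 ⟨h1, (Z.isZigzag.1 1).1⟩) hne
  refine ⟨Z', hZ', k, fun i => ?_⟩
  simpa [add_comm] using Z.isZigzag.add_eq_of_eq Z'.isZigzag hk0.symm hk1.symm i

instance (Z : T.Zigzag) (i : ℕ) (x y : V) : Decidable (Z.Passes i x y) :=
  inferInstanceAs (Decidable (_ ∧ _ ∧ _))

theorem passes_iff_of_seq_eq_add {Z Z' : T.Zigzag} {k : ℕ} (h : ∀ i, Z.seq i = Z'.seq (i + k))
    {i : ℕ} {x y : V} : Z.Passes i x y ↔ Z'.Passes (i + k) x y := by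
  rw [Passes, Passes, h, h, add_right_comm]

theorem exists_passes_iff_subset (Z : T.Zigzag) (i : ℕ) (F : Finset V) :
    (∃ a b, a ∈ F ∧ b ∈ F ∧ Z.Passes i a b) ↔ Z.seq i ⊆ F := by
  constructor
  · rintro ⟨a, b, ha, hb, hab, -, -⟩
    simp [hab, insert_subset_iff, ha, hb]
  · intro hF
    obtain ⟨a, b, hab, he⟩ := card_eq_two.1 (Z.isZigzag.1 i).1
    obtain ⟨c, hc⟩ := (Z.isZigzag.2.1 i).2.1
    rw [mem_inter, he, mem_insert, mem_singleton] at hc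
    have ha : a ∈ F := hF (by simp [he])
    have hb : b ∈ F := hF (by simp [he])
    rcases hc with ⟨rfl | rfl, hc⟩
    · exact ⟨b, c, hb, ha, by rw [he, pair_comm], hab.symm, hc⟩
    · exact ⟨a, c, ha, hb, he, hab, hc⟩

def EntersAt (Z : T.Zigzag) (F : Finset V) (x y : V) (i : ℕ) : Prop :=
  Z.Passes (i + 1) x y ∧ ∃ z ∈ F, z ≠ x ∧ z ≠ y ∧ Z.Passes i z x

def NextPassIn (Z : T.Zigzag) (F : Finset V) (i j : ℕ) (u v : V) : Prop :=
  i < j ∧ Z.Passes j u v ∧ u ∈ F ∧ v ∈ F ∧ ∀ k ∈ Ioo i j, ¬ Z.seq k ⊆ F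

instance (Z : T.Zigzag) (F : Finset V) (x y : V) (i : ℕ) : Decidable (Z.EntersAt F x y i) :=
  inferInstanceAs (Decidable (_ ∧ _))

instance (Z : T.Zigzag) (F : Finset V) (i j : ℕ) (u v : V) :
    Decidable (Z.NextPassIn F i j u v) :=
  inferInstanceAs (Decidable (_ ∧ _))

variable {Z Z' : T.Zigzag} {F : Finset V} {x y u v : V} {i j k : ℕ}

theorem entersAt_iff_of_seq_eq_add (h : ∀ n, Z.seq n = Z'.seq (n + k)) :
    Z.EntersAt F x y i ↔ Z'.EntersAt F x y (i + k) := by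
  simp only [EntersAt, passes_iff_of_seq_eq_add h, add_right_comm i 1 k]

theorem nextPassIn_iff_of_seq_eq_add (h : ∀ n, Z.seq n = Z'.seq (n + k)) :
    Z.NextPassIn F i j u v ↔ Z'.NextPassIn F (i + k) (j + k) u v := by
  simp only [NextPassIn, passes_iff_of_seq_eq_add h, add_lt_add_iff_right]
  refine and_congr_right fun _ => and_congr_right fun _ => and_congr_right fun _ =>
    and_congr_right fun _ => ⟨fun hmin m hm => ?_, fun hmin m hm => ?_⟩
  · obtain ⟨hm1, hm2⟩ := mem_Ioo.1 hm
    rw [← Nat.sub_add_cancel (by omega : k ≤ m), ← h]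
    exact hmin _ (mem_Ioo.2 ⟨by omega, by omega⟩)
  · rw [h]
    exact hmin _ (mem_Ioo.2 (by simpa using mem_Ioo.1 hm))

theorem NextPassIn.le_add_period (hi : Z.seq i ⊆ F) (hj : Z.NextPassIn F i j u v) :
    j ≤ i + Z.period := by
  by_contra! hlt
  exact hj.2.2.2.2 _ (mem_Ioo.2 ⟨by have := Z.period_pos; omega, hlt⟩) (by rwa [Z.periodic])

theorem monodromyRel_iff :
    T.MonodromyRel F x y u v ↔ x ∈ F ∧ y ∈ F ∧
      ∃ Z : T.Zigzag, ∃ i, Z.EntersAt F x y i ∧ ∃ j, Z.NextPassIn F (i + 1) j u v := by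
  simp only [MonodromyRel, EntersAt, NextPassIn, mem_Ioo, ← exists_passes_iff_subset]
  constructor
  · rintro ⟨hx, hy, Z, i, j, hz, hxy, hij, huv, hu, hv, hmin⟩
    exact ⟨hx, hy, Z, i, ⟨hxy, hz⟩, j, hij, huv, hu, hv,
      fun m hm ⟨a, b, ha, hb, hab⟩ => hmin m hm.1 hm.2 a b ha hb hab⟩
  · rintro ⟨hx, hy, Z, i, ⟨hxy, hz⟩, j, hij, huv, hu, hv, hmin⟩
    exact ⟨hx, hy, Z, i, j, hz, hxy, hij, huv, hu, hv,
      fun m hm1 hm2 a b ha hb hab => hmin m ⟨hm1, hm2⟩ ⟨a, b, ha, hb, hab⟩⟩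

theorem monodromyRel_iff_of_forall_shift {Zs : List T.Zigzag}
    (hZs : ∀ Z : T.Zigzag, ∃ Z' ∈ Zs, ∃ k, ∀ i, Z.seq i = Z'.seq (i + k)) :
    T.MonodromyRel F x y u v ↔ x ∈ F ∧ y ∈ F ∧ ∃ Z ∈ Zs, ∃ i < Z.period,
      Z.EntersAt F x y i ∧ ∃ j < i + Z.period + 2, Z.NextPassIn F (i + 1) j u v := by
  rw [monodromyRel_iff]
  refine and_congr_right fun hx => and_congr_right fun hy => ⟨?_, ?_⟩
  · rintro ⟨Z, i, hi, j, hj⟩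
    obtain ⟨Z', hZ', k, hk⟩ := hZs Z
    rw [entersAt_iff_of_seq_eq_add hk] at hi
    rw [nextPassIn_iff_of_seq_eq_add hk, add_right_comm] at hj
    set p := Z'.period
    have hshift : ∀ n, Z'.seq n = Z'.seq (n + (i + k) / p * p) := fun n =>
      (by simpa using Function.Periodic.nat_mul Z'.periodic ((i + k) / p) n :).symm
    have hdiv := Nat.mod_add_div' (i + k) p
    have hle := hj.le_add_period (by rw [hi.1.1]; simp [insert_subset_iff, hx, hy])
    refine ⟨Z', hZ', (i + k) % p, Nat.mod_lt _ Z'.period_pos, ?_, j + k - (i + k) / p * p,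
      by omega, ?_⟩
    · rwa [entersAt_iff_of_seq_eq_add hshift, hdiv]
    · rwa [nextPassIn_iff_of_seq_eq_add hshift, add_right_comm, hdiv,
        Nat.sub_add_cancel (by have := hj.1; omega)]
  · rintro ⟨Z, -, i, -, hi, j, -, hj⟩
    exact ⟨Z, i, hi, j, hj⟩

end Zigzag

end Triangulation

namespace BP3ConnSum

open Triangulation Sum

abbrev V := Fin 5 ⊕ Fin 5

-- `inl 0, inl 1, inl 3` are the glued vertices `1 = 1'`, `2 = 2'`, `a = a'`; `inl 2, inl 4` are
-- `3, b` and `inr 2, inr 4` are `3', b'`. Consecutive faces share an edge.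
def faceList : List (Finset V) :=
  [{inl 3, inl 1, inl 2}, {inl 3, inl 2, inl 0}, {inl 4, inl 2, inl 0}, {inl 4, inl 1, inl 2},
    {inl 4, inl 0, inl 1}, {inr 4, inl 0, inl 1}, {inr 4, inl 1, inr 2}, {inr 4, inr 2, inl 0},
    {inl 3, inr 2, inl 0}, {inl 3, inl 1, inr 2}]

def triangulation : Triangulation V where
  faces := faceList.toFinset
  faces_nonempty := by decide
  card_eq := by decide
  edge_two_faces e he := by
    rintro ⟨F, hF, heF⟩
    exact (by decide : ∀ F ∈ faceList.toFinset, ∀ e ∈ F.powersetCard 2,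
      (faceList.toFinset.filter (e ⊆ ·)).card = 2) F hF e (mem_powersetCard.2 ⟨heF, he⟩)
  inter_le := by decide
  connected F hF F' hF' := by
    have : Std.Symm fun A B : Finset V => A ∈ faceList.toFinset ∧ B ∈ faceList.toFinset ∧
        (A ∩ B).card = 2 :=
      ⟨fun A B h => ⟨h.2.1, h.1, by rw [inter_comm]; exact h.2.2⟩⟩
    exact List.IsChain.reflTransGen_of_mem (by decide) (List.mem_toFinset.1 hF)
      (List.mem_toFinset.1 hF')

theorem faces_eq : triangulation.faces =
    connSumFaces bp3Faces bp3Faces ({3, 0, 1} : Finset (Fin 5)) ({3, 0, 1} : Finset (Fin 5)) id := by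
  decide

def closedWalkEdges (w : List V) (i : ℕ) : Finset V :=
  {w.getD (i % w.length) (inl 0), w.getD ((i + 1) % w.length) (inl 0)}

theorem closedWalkEdges_periodic (w : List V) : Function.Periodic (closedWalkEdges w) w.length :=
  fun i => by simp [closedWalkEdges, Nat.add_right_comm i]

-- In the paper's labels: `a 3' 2 b' 1 3' a 2 3 b 1 2 b' 3' 1 a 3 2 b 1 3 a 2 3' b' 1 2 b 3 1`.
def walk : List V :=
  [inl 3, inr 2, inl 1, inr 4, inl 0, inr 2, inl 3, inl 1, inl 2, inl 4, inl 0, inl 1, inr 4, inr 2,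
    inl 0, inl 3, inl 2, inl 1, inl 4, inl 0, inl 2, inl 3, inl 1, inr 2, inr 4, inl 0, inl 1, inl 4,
    inl 2, inl 0]

def zigzag : triangulation.Zigzag :=
  .ofPeriodic (closedWalkEdges walk) walk.length (by decide) (closedWalkEdges_periodic walk)
    (by decide) (by decide)

def zigzagRev : triangulation.Zigzag :=
  .ofPeriodic (closedWalkEdges walk.reverse) walk.reverse.length (by decide)
    (closedWalkEdges_periodic walk.reverse) (by decide) (by decide)

-- Edge `n` of the reversed walk is edge `28 - n` (mod 30) of `walk`.
theorem zigzagRev_seq (n : ℕ) : zigzagRev.seq n = zigzag.seq (58 - n % 30) := by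
  have h : ∀ r < 30, zigzagRev.seq r = zigzag.seq (58 - r) := by decide
  rw [← Function.Periodic.map_mod_nat zigzagRev.periodic]
  exact h _ (Nat.mod_lt _ zigzagRev.period_pos)

set_option synthInstance.maxSize 1000 in
theorem forall_seq_eq_add (Z : triangulation.Zigzag) :
    ∃ Z' ∈ [zigzag, zigzagRev], ∃ k, ∀ i, Z.seq i = Z'.seq (i + k) :=
  Zigzag.exists_seq_eq_add (by decide) Z

theorem zKnotted : triangulation.ZKnotted := by
  have hseq : ∀ {a b}, a % 30 = b % 30 → zigzag.seq a = zigzag.seq b := zigzag.seq_eq_of_mod_eq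
  refine ⟨⟨zigzag⟩, fun Z Z' => ?_⟩
  obtain ⟨S, hS, k, hk⟩ := forall_seq_eq_add Z
  obtain ⟨S', hS', k', hk'⟩ := forall_seq_eq_add Z'
  simp only [List.mem_cons, List.not_mem_nil, or_false] at hS hS'
  have hper : Z.period = 30 := by
    rw [Zigzag.period_eq_of_seq_eq_add hk]; rcases hS with rfl | rfl <;> rfl
  -- the shifts are `k' - k` and `28 - k - k'` modulo 30
  rcases hS with rfl | rfl <;> rcases hS' with rfl | rfl
  · exact .inl ⟨29 * k + k', fun i => by rw [hk, hk']; exact hseq (by omega)⟩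
  · exact .inr ⟨28 + 29 * (k + k'), fun i => by
      rw [hper, hk, hk', zigzagRev_seq]; exact hseq (by omega)⟩
  · exact .inr ⟨28 + 29 * (k + k'), fun i => by
      rw [hper, hk, hk', zigzagRev_seq]; exact hseq (by omega)⟩
  · exact .inl ⟨29 * k + k', fun i => by
      rw [hk, hk', zigzagRev_seq, zigzagRev_seq]; exact hseq (by omega)⟩

instance (F : Finset V) (x y u v : V) : Decidable (triangulation.MonodromyRel F x y u v) :=
  decidable_of_iff _ (Zigzag.monodromyRel_iff_of_forall_shift forall_seq_eq_add).symm

instance (F : Finset V) : Decidable (triangulation.MFIsD F) := by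
  unfold MFIsD; infer_instance

instance (F : Finset V) : Decidable (triangulation.MFIsM4 F) := by
  unfold MFIsM4; infer_instance

set_option maxRecDepth 20000 in
theorem mfIsD_iff : ∀ F ∈ triangulation.faces,
    (triangulation.MFIsD F ↔ F = faceB12 ∨ F = faceB'12) := by
  decide

set_option maxRecDepth 20000 in
theorem mfIsM4 : ∀ F ∈ triangulation.faces, F ≠ faceB12 → F ≠ faceB'12 →
    triangulation.MFIsM4 F := by
  decide

end BP3ConnSum

/-- the connected sum `BP₃ #_g BP₃'` of two 3-gonal bipyramids
glued along the faces `a12` and `a'1'2'` via `g(a) = a'`, `g(1) = 1'`,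
`g(2) = 2'` is z-knotted; exactly the faces `b12` and `b'12` have
z-monodromy of type (M2), all remaining eight faces are of type (M3) or
(M4), and `G₂` is the path `P₂`: its two vertices `b12` and `b'12` are
adjacent in the dual graph. -/
theorem bp3_connected_sum :
    ∃ T : Triangulation (Fin 5 ⊕ Fin 5),
      T.faces = connSumFaces bp3Faces bp3Faces ({3, 0, 1} : Finset (Fin 5))
        ({3, 0, 1} : Finset (Fin 5)) id ∧
      T.ZKnotted ∧
      (∀ F ∈ T.faces, (T.MFIsD F ↔ (F = faceB12 ∨ F = faceB'12))) ∧
      (∀ F ∈ T.faces, F ≠ faceB12 → F ≠ faceB'12 →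
        T.MFIsM3 F ∨ T.MFIsM4 F) ∧
      faceB12 ∈ T.faces ∧ faceB'12 ∈ T.faces ∧
      (faceB12 ∩ faceB'12).card = 2 := by
  refine ⟨BP3ConnSum.triangulation, BP3ConnSum.faces_eq, BP3ConnSum.zKnotted,
    BP3ConnSum.mfIsD_iff, fun F hF hB hB' => .inr (BP3ConnSum.mfIsM4 F hF hB hB'),
    by decide, by decide, by decide⟩
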